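/- arXiv:2308.11758 — 3 statements merged into one kernel-verified Lean document; each statement's English description precedes it below -/
import Mathlib

section
/- Let x, y be strings of length n and 0 < d ≤ n. Define λ^i[j] = (x[j .. j+2^i-1] = y[j .. j+2^i-1]) for 0 ≤ j ≤ n - 2^i, and p(m) = Σ_{i=0}^{m} bit_i(d)·2^i with p(-1)=0. Then for 0 ≤ j ≤ n - d, x[j .. j+d-1] = y[j .. j+d-1] if and only if ⋀_{i : bit_i(d)=1} λ^i[j + p(i-1)] holds. -/
/-- `x[a .. a+len-1]`. -/
def substr {α : Type*} (x : List α) (a len : ℕ) : List α := (x.drop a).take len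

/-- Matching substring predicate: `lam x y i j` holds iff the length-`2^i`
substrings of `x` and `y` starting at `j` coincide (`λ^i[j] = 1`). -/
def lam {α : Type*} (x y : List α) (i j : ℕ) : Prop :=
  substr x j (2 ^ i) = substr y j (2 ^ i)

/-- `psum d m = Σ_{i=0}^{m-1} bit_i(d)·2^i`, i.e. the paper's `p(m-1)`;
so `p(i-1) = psum d i`. -/
def psum (d m : ℕ) : ℕ := ∑ i ∈ Finset.range m, if d.testBit i then 2 ^ i else 0

lemma mod_pow_succ' (d m : ℕ) :
    d % 2 ^ (m + 1) = d % 2 ^ m + if d.testBit m then 2 ^ m else 0 := by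
  rw [Nat.mod_pow_succ, Nat.testBit]
  rcases Nat.mod_two_eq_zero_or_one (d / 2 ^ m) with h | h <;>
    simp [Nat.shiftRight_eq_div_pow, Nat.and_one_is_mod, h] <;> omega

lemma psum_eq_mod (d m : ℕ) : psum d m = d % 2 ^ m := by
  induction m with
  | zero => simp [psum, Nat.mod_one]
  | succ m ih =>
    rw [psum, Finset.sum_range_succ, ← psum, ih, mod_pow_succ' d m]

lemma substr_split {α : Type*} (x : List α) (j a b : ℕ) :
    substr x j (a + b) = substr x j a ++ substr x (j + a) b := by
  simp [substr, List.take_add, List.drop_drop, Nat.add_comm a j]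

/-- Lemma 1 restated with the matching substring vectors:
`x[j..j+d-1] = y[j..j+d-1]` iff `λ^i[j + p(i-1)]` holds for every
set bit `i` of `d`. -/
theorem stmt4 {α : Type*} (n d j : ℕ) (x y : List α)
    (hx : x.length = n) (hy : y.length = n)
    (hd0 : 0 < d) (hdn : d ≤ n) (hj : j + d ≤ n) :
    substr x j d = substr y j d ↔
      ∀ i, d.testBit i = true → lam x y i (j + psum d i) := by
  constructor
  · intro h i hi
    have hle : d % 2 ^ i + 2 ^ i ≤ d := by
      have := mod_pow_succ' d i
      rw [hi] at this
      simp only [if_true] at this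
      have := Nat.mod_le d (2 ^ (i + 1))
      omega
    unfold lam
    rw [psum_eq_mod]
    set a := d % 2 ^ i with ha
    have key : ∀ z : List α, ((substr z j d).drop a).take (2 ^ i) =
        substr z (j + a) (2 ^ i) := by
      intro z
      simp only [substr, List.drop_take, List.drop_drop, List.take_take]
      rw [Nat.min_eq_left (by omega)]
    rw [← key, ← key, h]
  · intro h
    have main : ∀ m, substr x j (d % 2 ^ m) = substr y j (d % 2 ^ m) := by
      intro m
      induction m with
      | zero => simp [substr, Nat.mod_one]
      | succ m ih =>
        rw [mod_pow_succ' d m]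
        by_cases hb : d.testBit m
        · simp only [hb, if_true]
          rw [substr_split, substr_split]
          have := h m hb
          rw [lam, psum_eq_mod] at this
          rw [ih, this]
        · simpa [hb] using ih
    have : d % 2 ^ d = d := Nat.mod_eq_of_lt (Nat.lt_two_pow_self (n := d))
    have := main d
    rwa [Nat.mod_eq_of_lt (Nat.lt_two_pow_self (n := d))] at this
end

section
/- Let x, y be strings of length n, let 0 < d ≤ n, and let p(m) = Σ_{i=0}^{m} bit_i(d)·2^i. Define Boolean vectors D^i (for -1 ≤ i) by D^{-1}[j] = true for all j, and D^i = D^{i-1} if bit_i(d) = 0, while if bit_i(d) = 1 then D^i[j + 2^i] = D^{i-1}[j] ∧ λ^i[j] (shift right by 2^i after conjunction with λ^i), where λ^i[j] = (x[j..j+2^i-1] = y[j..j+2^i-1]). Then for every i ≥ 0 and every valid position j, D^i[j + p(i)] = true if and only if x[j .. j + p(i) - 1] = y[j .. j + p(i) - 1]. -/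
/-- The FSM recursion on Boolean vectors. `Dvec x y d init i j` is the value
`D^{i-1}[j]`: `Dvec x y d init 0 = init` is the initialization `D^{-1}`, and
for each bit `i` of `d`, `D^i = D^{i-1}` if `bit_i(d) = 0`, while if
`bit_i(d) = 1` then `D^i` is the rightward shift by `2^i` of the pointwise
conjunction of `D^{i-1}` with `λ^i` (positions `< 2^i` becoming `false`):
`D^i[j] = D^{i-1}[j - 2^i] ∧ λ^i[j - 2^i]` for `j ≥ 2^i`, where
`λ^i[j] = (x[j..j+2^i-1] = y[j..j+2^i-1])`. -/
def Dvec {α : Type*} [DecidableEq α] (x y : List α) (d : ℕ) (init : ℕ → Bool) :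
    ℕ → ℕ → Bool
  | 0, j => init j
  | i + 1, j =>
      if d.testBit i then
        if 2 ^ i ≤ j then
          Dvec x y d init i (j - 2 ^ i) &&
            decide (substr x (j - 2 ^ i) (2 ^ i) = substr y (j - 2 ^ i) (2 ^ i))
        else false
      else Dvec x y d init i j

lemma substr_add {α : Type*} (x : List α) (a l1 l2 : ℕ) :
    substr x a (l1 + l2) = substr x a l1 ++ substr x (a + l1) l2 := by
  simp [substr, List.take_add, List.drop_drop, Nat.add_comm]

lemma substr_length {α : Type*} (x : List α) (a l : ℕ) (h : a + l ≤ x.length) :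
    (substr x a l).length = l := by
  simp [substr]; omega

/-- Correctness invariant (equation (4)) of the FSM iteration, with
`D^{-1} ≡ true`: for every `i ≥ 0` and every valid position `j`
(`j + p(i) ≤ n`), `D^i[j + p(i)] = true` iff
`x[j .. j+p(i)-1] = y[j .. j+p(i)-1]` (here `p(i) = psum d (i+1)` and
`D^i = Dvec x y d init (i+1)`). -/
theorem stmt5 {α : Type*} [DecidableEq α] (n d : ℕ) (x y : List α)
    (hx : x.length = n) (hy : y.length = n) (hd0 : 0 < d) (hdn : d ≤ n) :
    ∀ i j, j + psum d (i + 1) ≤ n →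
      (Dvec x y d (fun _ => true) (i + 1) (j + psum d (i + 1)) = true ↔
        substr x j (psum d (i + 1)) = substr y j (psum d (i + 1))) := by
  intro i
  induction i with
  | zero =>
    intro j hj
    by_cases hb : d.testBit 0
    · have hp : psum d 1 = 1 := by simp [psum, hb]
      rw [hp]
      simp [Dvec, hb]
    · have hp : psum d 1 = 0 := by simp [psum, hb]
      rw [hp]
      simp [Dvec, hb, substr]
  | succ i ih =>
    have hp : psum d (i + 2) = psum d (i + 1) +
        (if d.testBit (i + 1) then 2 ^ (i + 1) else 0) :=
      Finset.sum_range_succ _ _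
    intro j hj
    by_cases hb : d.testBit (i + 1)
    · have hp1 : psum d (i + 2) = psum d (i + 1) + 2 ^ (i + 1) := by
        rw [hp, if_pos hb]
      rw [hp1] at hj ⊢
      have h2 : 2 ^ (i + 1) ≤ j + (psum d (i + 1) + 2 ^ (i + 1)) := by omega
      have hsub : j + (psum d (i + 1) + 2 ^ (i + 1)) - 2 ^ (i + 1)
          = j + psum d (i + 1) := by omega
      have hstep : Dvec x y d (fun _ => true) (i + 2)
            (j + (psum d (i + 1) + 2 ^ (i + 1)))
          = (Dvec x y d (fun _ => true) (i + 1) (j + psum d (i + 1)) &&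
            decide (substr x (j + psum d (i + 1)) (2 ^ (i + 1))
              = substr y (j + psum d (i + 1)) (2 ^ (i + 1)))) := by
        conv_lhs => rw [Dvec]
        rw [if_pos hb, if_pos h2, hsub]
      rw [hstep]
      have hj' : j + psum d (i + 1) ≤ n := by omega
      have ihj := ih j hj'
      rw [Bool.and_eq_true, decide_eq_true_iff, ihj]
      rw [substr_add, substr_add]
      constructor
      · rintro ⟨h1, h2⟩; rw [h1, h2]
      · intro h
        have hlx : (substr x j (psum d (i + 1))).length = psum d (i + 1) :=
          substr_length x j _ (by omega)
        have hly : (substr y j (psum d (i + 1))).length = psum d (i + 1) :=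
          substr_length y j _ (by omega)
        exact List.append_inj h (hlx.trans hly.symm)
    · have hp0 : psum d (i + 2) = psum d (i + 1) := by
        rw [hp, if_neg hb, Nat.add_zero]
      rw [hp0] at hj ⊢
      have hstep : Dvec x y d (fun _ => true) (i + 2) (j + psum d (i + 1))
          = Dvec x y d (fun _ => true) (i + 1) (j + psum d (i + 1)) := by
        conv_lhs => rw [Dvec]
        rw [if_neg hb]
      rw [hstep]
      exact ih j hj
end

section
/- Let x, y be strings of length n, let 0 < d ≤ n, and let L = ⌊log₂ d⌋. With the FSM recursion initialized with D^{-1}[0] = true and D^{-1}[j] = false for j > 0, the value D^{L}[d] is true if and only if x[0 .. d-1] = y[0 .. d-1]. -/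
lemma split_iff {α : Type*} (x y : List α) (hxy : x.length = y.length) (a b : ℕ) :
    substr x 0 (a + b) = substr y 0 (a + b) ↔
      substr x 0 a = substr y 0 a ∧ substr x a b = substr y a b := by
  simp only [substr, List.drop_zero, List.take_add]
  constructor
  · intro h
    have hl : (x.take a).length = (y.take a).length := by simp [hxy]
    obtain ⟨h1, h2⟩ := List.append_inj h hl
    exact ⟨h1, h2⟩
  · rintro ⟨h1, h2⟩; rw [h1, h2]

lemma key {α : Type*} [DecidableEq α] (x y : List α) (hxy : x.length = y.length)
    (d : ℕ) : ∀ m j, Dvec x y d (fun j => decide (j = 0)) m j = true ↔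
      (j = psum d m ∧ substr x 0 j = substr y 0 j) := by
  intro m
  induction m with
  | zero => intro j; simp [Dvec, psum, substr]; rintro rfl; simp
  | succ m ih =>
    intro j
    by_cases h : d.testBit m
    · have hp : psum d (m + 1) = psum d m + 2 ^ m := by
        simp [psum, Finset.sum_range_succ, h]
      by_cases hj : 2 ^ m ≤ j
      · simp only [Dvec, h, if_true, hj, if_true, Bool.and_eq_true, decide_eq_true_eq, ih]
        rw [hp]
        constructor
        · rintro ⟨⟨h1, h2⟩, h3⟩
          have hje : j = psum d m + 2 ^ m := by omega
          refine ⟨hje, ?_⟩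
          rw [hje, (split_iff x y hxy (psum d m) (2 ^ m)).mpr ⟨by rwa [← h1], by rwa [← h1]⟩]
        · rintro ⟨rfl, h2⟩
          have h1 : psum d m + 2 ^ m - 2 ^ m = psum d m := by omega
          rw [split_iff x y hxy] at h2
          rw [h1]
          exact ⟨⟨rfl, h2.1⟩, h2.2⟩
      · simp only [Dvec, h, if_true, hj, if_false]
        rw [hp]
        constructor
        · intro hc; exact absurd hc (by simp)
        · rintro ⟨rfl, -⟩; omega
    · have : psum d (m + 1) = psum d m := by simp [psum, Finset.sum_range_succ, h]
      simp only [Dvec, h, if_neg Bool.false_ne_true, ih, this]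

/-- Correctness for the Fixed Prefix Matching (FPM) problem: with
`D^{-1}[0] = true` and `D^{-1}[j] = false` for `j > 0`, and `L = ⌊log₂ d⌋`,
`D^L[d] = true` iff `x[0..d-1] = y[0..d-1]`
(here `D^L = Dvec x y d init (L+1)`). -/
theorem stmt7 {α : Type*} [DecidableEq α] (n d : ℕ) (x y : List α)
    (hx : x.length = n) (hy : y.length = n) (hd0 : 0 < d) (hdn : d ≤ n) :
    Dvec x y d (fun j => decide (j = 0)) (Nat.log2 d + 1) d = true ↔
      substr x 0 d = substr y 0 d := by
  rw [key x y (hx.trans hy.symm) d]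
  have : psum d (Nat.log2 d + 1) = d := by
    rw [psum_eq_mod]
    exact Nat.mod_eq_of_lt (Nat.lt_log2_self)
  simp [this]
end
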